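/- arXiv:2602.14586 — 2 statements merged into one kernel-verified Lean document; each statement's English description precedes it below -/
import Mathlib

section
/- For all h_1, h_2 ∈ GL_2(F) with det(h_1) = det(h_2), the pair (h_1, j(h_1,h_2)) belongs to R = GL_2(F) ⊠ GSp_4(F), and the stabilizer in R of the 2-dimensional totally isotropic subspace span{e_2+f_1, e_1+f_2} ⊆ F^6 (for the right action via ι) equals exactly the set {(h_1, j(h_1,h_2)) : h_1, h_2 ∈ GL_2(F), det(h_1) = det(h_2)}. -/
/-!
Statement 3: For all h₁, h₂ ∈ GL₂(F) with det h₁ = det h₂, the pair (h₁, j(h₁,h₂))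
belongs to R = GL₂(F) ⊠ GSp₄(F), and the stabilizer in R of the 2-dimensional totally
isotropic subspace span{e₂+f₁, e₁+f₂} ⊆ F⁶ (for the right action via ι) equals exactly
the set {(h₁, j(h₁,h₂)) : h₁, h₂ ∈ GL₂(F), det h₁ = det h₂}.
-/

open Matrix

variable (F : Type*) [Field F]

def J4 : Matrix (Fin 4) (Fin 4) F :=
  Matrix.of fun i j => if (i : ℕ) + (j : ℕ) = 3 then (if (i : ℕ) < 2 then 1 else -1) else 0

def J6 : Matrix (Fin 6) (Fin 6) F :=
  Matrix.of fun i j => if (i : ℕ) + (j : ℕ) = 5 then (if (i : ℕ) < 3 then 1 else -1) else 0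

def B6 (v w : Fin 6 → F) : F := v ⬝ᵥ ((J6 F) *ᵥ w)

/-- `(g₁, g₂) ∈ R = GL₂(F) ⊠ GSp₄(F)`. -/
def InR (p : Matrix (Fin 2) (Fin 2) F × Matrix (Fin 4) (Fin 4) F) : Prop :=
  p.1.det ≠ 0 ∧ p.2ᵀ * J4 F * p.2 = p.1.det • J4 F

def iota (a : Matrix (Fin 2) (Fin 2) F) (b : Matrix (Fin 4) (Fin 4) F) :
    Matrix (Fin 6) (Fin 6) F :=
  !![a 0 0, 0, 0, 0, 0, a 0 1;
     0, b 0 0, b 0 1, b 0 2, b 0 3, 0;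
     0, b 1 0, b 1 1, b 1 2, b 1 3, 0;
     0, b 2 0, b 2 1, b 2 2, b 2 3, 0;
     0, b 3 0, b 3 1, b 3 2, b 3 3, 0;
     a 1 0, 0, 0, 0, 0, a 1 1]

def e1 : Fin 6 → F := Pi.single (0 : Fin 6) (1 : F)
def e2 : Fin 6 → F := Pi.single (1 : Fin 6) (1 : F)
def f2 : Fin 6 → F := Pi.single (4 : Fin 6) (1 : F)
def f1 : Fin 6 → F := Pi.single (5 : Fin 6) (1 : F)

/-- `span{e₂ + f₁, e₁ + f₂}` -/
def repD : Submodule F (Fin 6 → F) := Submodule.span F {e2 F + f1 F, e1 F + f2 F}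

/-- `j(h₁,h₂)`: for `h₁ = [[a,b],[c,d]]`, the matrix with `d` at (1,1), `c` at (1,4),
`b` at (4,1), `a` at (4,4), and `h₂` as central 2×2 block. -/
def jmap (h₁ h₂ : Matrix (Fin 2) (Fin 2) F) : Matrix (Fin 4) (Fin 4) F :=
  !![h₁ 1 1, 0, 0, h₁ 1 0;
     0, h₂ 0 0, h₂ 0 1, 0;
     0, h₂ 1 0, h₂ 1 1, 0;
     h₁ 0 1, 0, 0, h₁ 0 0]

set_option linter.unusedSectionVars false

@[simp] lemma v6_0 (a b c d e f : F) : ![a,b,c,d,e,f] 0 = a := rfl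
@[simp] lemma v6_1 (a b c d e f : F) : ![a,b,c,d,e,f] 1 = b := rfl
@[simp] lemma v6_2 (a b c d e f : F) : ![a,b,c,d,e,f] 2 = c := rfl
@[simp] lemma v6_3 (a b c d e f : F) : ![a,b,c,d,e,f] 3 = d := rfl
@[simp] lemma v6_4 (a b c d e f : F) : ![a,b,c,d,e,f] 4 = e := rfl
@[simp] lemma v6_5 (a b c d e f : F) : ![a,b,c,d,e,f] 5 = f := rfl
@[simp] lemma v4_0 (a b c d : F) : ![a,b,c,d] 0 = a := rfl
@[simp] lemma v4_1 (a b c d : F) : ![a,b,c,d] 1 = b := rfl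
@[simp] lemma v4_2 (a b c d : F) : ![a,b,c,d] 2 = c := rfl
@[simp] lemma v4_3 (a b c d : F) : ![a,b,c,d] 3 = d := rfl

@[simp] lemma iota_r0 (a : Matrix (Fin 2) (Fin 2) F) (b : Matrix (Fin 4) (Fin 4) F) :
    iota F a b 0 = ![a 0 0, 0, 0, 0, 0, a 0 1] := rfl
@[simp] lemma iota_r1 (a : Matrix (Fin 2) (Fin 2) F) (b : Matrix (Fin 4) (Fin 4) F) :
    iota F a b 1 = ![0, b 0 0, b 0 1, b 0 2, b 0 3, 0] := rfl
@[simp] lemma iota_r2 (a : Matrix (Fin 2) (Fin 2) F) (b : Matrix (Fin 4) (Fin 4) F) :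
    iota F a b 2 = ![0, b 1 0, b 1 1, b 1 2, b 1 3, 0] := rfl
@[simp] lemma iota_r3 (a : Matrix (Fin 2) (Fin 2) F) (b : Matrix (Fin 4) (Fin 4) F) :
    iota F a b 3 = ![0, b 2 0, b 2 1, b 2 2, b 2 3, 0] := rfl
@[simp] lemma iota_r4 (a : Matrix (Fin 2) (Fin 2) F) (b : Matrix (Fin 4) (Fin 4) F) :
    iota F a b 4 = ![0, b 3 0, b 3 1, b 3 2, b 3 3, 0] := rfl
@[simp] lemma iota_r5 (a : Matrix (Fin 2) (Fin 2) F) (b : Matrix (Fin 4) (Fin 4) F) :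
    iota F a b 5 = ![a 1 0, 0, 0, 0, 0, a 1 1] := rfl

@[simp] lemma jmap_r0 (h₁ h₂ : Matrix (Fin 2) (Fin 2) F) :
    jmap F h₁ h₂ 0 = ![h₁ 1 1, 0, 0, h₁ 1 0] := rfl
@[simp] lemma jmap_r1 (h₁ h₂ : Matrix (Fin 2) (Fin 2) F) :
    jmap F h₁ h₂ 1 = ![0, h₂ 0 0, h₂ 0 1, 0] := rfl
@[simp] lemma jmap_r2 (h₁ h₂ : Matrix (Fin 2) (Fin 2) F) :
    jmap F h₁ h₂ 2 = ![0, h₂ 1 0, h₂ 1 1, 0] := rfl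
@[simp] lemma jmap_r3 (h₁ h₂ : Matrix (Fin 2) (Fin 2) F) :
    jmap F h₁ h₂ 3 = ![h₁ 0 1, 0, 0, h₁ 0 0] := rfl

lemma mem_repD (v : Fin 6 → F) :
    v ∈ repD F ↔ v 2 = 0 ∧ v 3 = 0 ∧ v 4 = v 0 ∧ v 5 = v 1 := by
  rw [repD, Submodule.mem_span_pair]
  constructor
  · rintro ⟨a, b, rfl⟩
    simp [e1, e2, f1, f2, Pi.single_apply]
  · rintro ⟨h2, h3, h4, h5⟩
    refine ⟨v 1, v 0, ?_⟩
    funext i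
    fin_cases i <;>
      simp [e1, e2, f1, f2, Pi.single_apply, h2, h3, h4, h5]

lemma jmap_stab (h₁ h₂ : Matrix (Fin 2) (Fin 2) F) (hd : h₁.det ≠ 0) :
    Submodule.map (Matrix.vecMulLinear (iota F h₁ (jmap F h₁ h₂))) (repD F) = repD F := by
  set M := iota F h₁ (jmap F h₁ h₂) with hM
  apply le_antisymm
  · refine Submodule.map_le_iff_le_comap.mpr (Submodule.span_le.mpr ?_)
    rintro x (rfl | rfl) <;>
    · refine Submodule.mem_comap.mpr ((mem_repD F _).mpr ⟨?_, ?_, ?_, ?_⟩) <;>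
        simp [Matrix.vecMulLinear_apply, vecMul, dotProduct, Fin.sum_univ_six, hM,
          e1, e2, f1, f2, Pi.single_apply]
  · refine Submodule.span_le.mpr ?_
    rintro x (rfl | rfl)
    · refine Submodule.mem_map.mpr ⟨![-(h₁.det⁻¹ * h₁ 1 0), h₁.det⁻¹ * h₁ 0 0, 0, 0,
        -(h₁.det⁻¹ * h₁ 1 0), h₁.det⁻¹ * h₁ 0 0], (mem_repD F _).mpr ⟨?_, ?_, ?_, ?_⟩, ?_⟩ <;>
        try simp
      funext j
      fin_cases j <;>
        simp [Matrix.vecMulLinear_apply, vecMul, dotProduct, Fin.sum_univ_six, hM,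
          e1, e2, f1, f2, Pi.single_apply] <;>
        (try tauto) <;> (try ring) <;>
          (try (rw [Matrix.det_fin_two] at hd ⊢; field_simp [hd]; try ring))
    · refine Submodule.mem_map.mpr ⟨![h₁.det⁻¹ * h₁ 1 1, -(h₁.det⁻¹ * h₁ 0 1), 0, 0,
        h₁.det⁻¹ * h₁ 1 1, -(h₁.det⁻¹ * h₁ 0 1)], (mem_repD F _).mpr ⟨?_, ?_, ?_, ?_⟩, ?_⟩ <;>
        try simp
      funext j
      fin_cases j <;>
        simp [Matrix.vecMulLinear_apply, vecMul, dotProduct, Fin.sum_univ_six, hM,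
          e1, e2, f1, f2, Pi.single_apply] <;>
        (try tauto) <;> (try ring) <;>
          (try (rw [Matrix.det_fin_two] at hd ⊢; field_simp [hd]; try ring))

lemma part1 (h₁ h₂ : Matrix (Fin 2) (Fin 2) F)
    (hd1 : h₁.det ≠ 0) (hdd : h₁.det = h₂.det) : InR F (h₁, jmap F h₁ h₂) := by
  refine ⟨hd1, ?_⟩
  rw [Matrix.det_fin_two, Matrix.det_fin_two] at hdd
  ext i j
  fin_cases i <;> fin_cases j <;>
    simp [Matrix.mul_apply, Fin.sum_univ_four, Matrix.transpose_apply, J4,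
      Matrix.smul_apply, smul_eq_mul, Matrix.det_fin_two,
      show ((0:Fin 4):ℕ) = 0 from rfl, show ((1:Fin 4):ℕ) = 1 from rfl,
      show ((2:Fin 4):ℕ) = 2 from rfl, show ((3:Fin 4):ℕ) = 3 from rfl] <;>
    first
      | ring1
      | linear_combination hdd
      | linear_combination hdd.symm

lemma stab_sub (g₁ : Matrix (Fin 2) (Fin 2) F) (g₂ : Matrix (Fin 4) (Fin 4) F)
    (hd : g₁.det ≠ 0) (hsymp : g₂ᵀ * J4 F * g₂ = g₁.det • J4 F)
    (hstab : Submodule.map (Matrix.vecMulLinear (iota F g₁ g₂)) (repD F) = repD F) :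
    ∃ h₂ : Matrix (Fin 2) (Fin 2) F, h₂.det ≠ 0 ∧ g₁.det = h₂.det ∧ g₂ = jmap F g₁ h₂ := by
  have hgen1 : e2 F + f1 F ∈ repD F := Submodule.subset_span (Set.mem_insert _ _)
  have hgen2 : e1 F + f2 F ∈ repD F := Submodule.subset_span (Set.mem_insert_of_mem _ rfl)
  have hx : Matrix.vecMulLinear (iota F g₁ g₂) (e2 F + f1 F) ∈ repD F := by
    rw [← hstab]; exact Submodule.mem_map_of_mem hgen1
  have hy : Matrix.vecMulLinear (iota F g₁ g₂) (e1 F + f2 F) ∈ repD F := by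
    rw [← hstab]; exact Submodule.mem_map_of_mem hgen2
  rw [mem_repD] at hx hy
  simp [Matrix.vecMulLinear_apply, vecMul, dotProduct, Fin.sum_univ_six,
    e1, e2, f1, f2, Pi.single_apply] at hx hy
  have E01 := congrFun (congrFun hsymp 0) 1
  have E02 := congrFun (congrFun hsymp 0) 2
  have E12 := congrFun (congrFun hsymp 1) 2
  have E13 := congrFun (congrFun hsymp 1) 3
  have E23 := congrFun (congrFun hsymp 2) 3
  simp [Matrix.mul_apply, Fin.sum_univ_four, Matrix.transpose_apply, J4,
      Matrix.smul_apply, smul_eq_mul,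
      show ((0:Fin 4):ℕ) = 0 from rfl, show ((1:Fin 4):ℕ) = 1 from rfl,
      show ((2:Fin 4):ℕ) = 2 from rfl, show ((3:Fin 4):ℕ) = 3 from rfl] at E01 E02 E12 E13 E23
  obtain ⟨x1, x2, x3, x4⟩ := hx
  obtain ⟨y1, y2, y3, y4⟩ := hy
  simp only [x1, x2, y1, y2, mul_zero, zero_mul, neg_zero, add_zero, zero_add] at E01 E02 E12 E13 E23
  have hp : g₂ 1 0 = 0 := by
    have h0 : g₂ 1 0 * g₁.det = 0 := by
      linear_combination g₂ 1 1 * E02 - g₂ 1 2 * E01 - g₂ 1 0 * E12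
    exact (mul_eq_zero.mp h0).resolve_right hd
  have hp' : g₂ 2 0 = 0 := by
    have h0 : g₂ 2 0 * g₁.det = 0 := by
      linear_combination -g₂ 2 2 * E01 + g₂ 2 1 * E02 - g₂ 2 0 * E12
    exact (mul_eq_zero.mp h0).resolve_right hd
  have hs : g₂ 1 3 = 0 := by
    have h0 : g₂ 1 3 * g₁.det = 0 := by
      linear_combination g₂ 1 2 * E13 - g₂ 1 1 * E23 - g₂ 1 3 * E12
    exact (mul_eq_zero.mp h0).resolve_right hd
  have hs' : g₂ 2 3 = 0 := by
    have h0 : g₂ 2 3 * g₁.det = 0 := by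
      linear_combination g₂ 2 2 * E13 - g₂ 2 1 * E23 - g₂ 2 3 * E12
    exact (mul_eq_zero.mp h0).resolve_right hd
  have hν : (!![g₂ 1 1, g₂ 1 2; g₂ 2 1, g₂ 2 2] : Matrix (Fin 2) (Fin 2) F).det = g₁.det := by
    rw [Matrix.det_fin_two_of]
    linear_combination E12
  refine ⟨!![g₂ 1 1, g₂ 1 2; g₂ 2 1, g₂ 2 2], by rw [hν]; exact hd, hν.symm, ?_⟩
  ext i j
  fin_cases i <;> fin_cases j <;>
    simp [x1, x2, x3, x4, y1, y2, y3, y4, hp, hp', hs, hs']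

theorem statement3 :
    (∀ h₁ h₂ : Matrix (Fin 2) (Fin 2) F,
        h₁.det ≠ 0 → h₂.det ≠ 0 → h₁.det = h₂.det → InR F (h₁, jmap F h₁ h₂)) ∧
    ({p : Matrix (Fin 2) (Fin 2) F × Matrix (Fin 4) (Fin 4) F |
        InR F p ∧ Submodule.map (Matrix.vecMulLinear (iota F p.1 p.2)) (repD F) = repD F} =
      {p : Matrix (Fin 2) (Fin 2) F × Matrix (Fin 4) (Fin 4) F |
        ∃ h₁ h₂ : Matrix (Fin 2) (Fin 2) F,
          h₁.det ≠ 0 ∧ h₂.det ≠ 0 ∧ h₁.det = h₂.det ∧ p = (h₁, jmap F h₁ h₂)}) := by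
  refine ⟨fun h₁ h₂ hd1 _ hdd => part1 F h₁ h₂ hd1 hdd, ?_⟩
  ext p
  simp only [Set.mem_setOf_eq]
  constructor
  · rintro ⟨⟨hd, hsymp⟩, hstab⟩
    obtain ⟨h₂, hd2, hdd, hg⟩ := stab_sub F p.1 p.2 hd hsymp hstab
    exact ⟨p.1, h₂, hd, hd2, hdd, by rw [← hg]⟩
  · rintro ⟨h₁, h₂, hd1, hd2, hdd, rfl⟩
    exact ⟨part1 F h₁ h₂ hd1 hdd, jmap_stab F h₁ h₂ hd1⟩
end

section
/- The right action of GL_4(F) × F^× (via the homomorphism e) on the set of 2-dimensional totally isotropic subspaces of the split quadratic space (F^8, B) has exactly seven orbits. -/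
/-!
Statement 6: The right action of GL₄(F) × F^× (via the homomorphism e) on the set of
2-dimensional totally isotropic subspaces of the split quadratic space (F⁸, B) has
exactly seven orbits.
-/

open Matrix

variable (F : Type*) [Field F]

/-- The n×n matrix with 1 in every antidiagonal entry and 0 elsewhere. -/
def Ip (n : ℕ) : Matrix (Fin n) (Fin n) F :=
  Matrix.of fun i j => if (i : ℕ) + (j : ℕ) = n - 1 then 1 else 0

/-- The split symmetric bilinear form `B(v,w) = v · I'₈ · ᵀw` on row vectors of `F⁸`. -/
def B8 (v w : Fin 8 → F) : F := v ⬝ᵥ ((Ip F 8) *ᵥ w)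

def TotallyIsotropic (S : Submodule F (Fin 8 → F)) : Prop :=
  ∀ v ∈ S, ∀ w ∈ S, B8 F v w = 0

/-- `e(r,a) = block-diag(r, a·I'₄·ᵀr⁻¹·I'₄)`. -/
noncomputable def emap (r : Matrix (Fin 4) (Fin 4) F) (a : F) : Matrix (Fin 8) (Fin 8) F :=
  Matrix.of fun i j =>
    if hi : (i : ℕ) < 4 then
      if hj : (j : ℕ) < 4 then r ⟨(i : ℕ), hi⟩ ⟨(j : ℕ), hj⟩ else 0
    else
      if hj : (j : ℕ) < 4 then 0
      else
        a * (Ip F 4 * r⁻¹ᵀ * Ip F 4)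
          ⟨(i : ℕ) - 4, by have := i.isLt; omega⟩
          ⟨(j : ℕ) - 4, by have := j.isLt; omega⟩

/-- `S` and `T` lie in the same orbit under the right action of `GL₄(F) × F^×` via `e`. -/
noncomputable def SameOrbit (S T : Submodule F (Fin 8 → F)) : Prop :=
  ∃ (r : Matrix (Fin 4) (Fin 4) F) (a : F), r.det ≠ 0 ∧ a ≠ 0 ∧
    Submodule.map (Matrix.vecMulLinear (emap F r a)) S = T

/-!
Write `v = ∑ xᵢ eᵢ + ∑ yᵢ fᵢ`. Then `B(v, w) = x_v · y_w + x_w · y_v`, and `e(r, a)` acts by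
`(x, y) ↦ (x r, a r⁻¹ y)`, so the pairing `β(v, w) = x_v · y_w` is only rescaled by `a`. Hence
`S ≤ U₁`, `S ≤ U₂`, `S ⊓ U₁ = 0`, `S ⊓ U₂ = 0` and `β|_S = 0` are orbit invariants, and they take
seven different value patterns on seven explicit planes.

Conversely, every plane is moved onto the explicit plane with the same invariants by one normal
form: for independent rows `p₁, p₂` and independent columns `q₁, q₂` in `F⁴` there is an
invertible `r` with first rows `p₁, p₂` and `r qⱼ = (p₁ · qⱼ, p₂ · qⱼ, δ₁ⱼ, δ₂ⱼ)`. Degenerate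
planes are first padded with vectors orthogonal to the given ones; total isotropy (and
`char F ≠ 2`, through `β(v, v) = B(v, v) / 2`) makes the padded data satisfy the required
orthogonality relations.
-/

namespace IsotropicPlanes

variable {F}

section Pairs

variable {V W : Type*} [AddCommGroup V] [Module F V] [AddCommGroup W] [Module F W]

lemma finrank_span_pair {u w : V} (h : LinearIndependent F ![u, w]) :
    Module.finrank F (Submodule.span F {u, w}) = 2 := by
  rw [← Matrix.range_cons_cons_empty u w ![], finrank_span_eq_card h, Fintype.card_fin]

lemma eq_span_pair_of_linearIndependent {S : Submodule F V} (hS : Module.finrank F S = 2)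
    {u w : V} (hu : u ∈ S) (hw : w ∈ S) (h : LinearIndependent F ![u, w]) :
    S = Submodule.span F {u, w} :=
  have : Module.Finite F S := Module.finite_of_finrank_eq_succ hS
  (Submodule.eq_of_le_of_finrank_eq (Submodule.span_le.2 (by simp [Set.insert_subset_iff, hu, hw]))
    (by rw [finrank_span_pair h, hS])).symm

lemma linearIndependent_pair_of_apply {ι : Type*} {u w : ι → F} (i j : ι) (hui : u i = 1)
    (hwi : w i = 0) (hwj : w j = 1) : LinearIndependent F ![u, w] := by
  rw [LinearIndependent.pair_iff]
  intro s t h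
  have hi := congrFun h i
  have hj := congrFun h j
  simp_all

lemma linearIndependent_pair_of_mem_of_not_mem {U : Submodule F V} {u w : V} (hu : u ∈ U)
    (hu₀ : u ≠ 0) (hw : w ∉ U) : LinearIndependent F ![u, w] :=
  (LinearIndependent.pair_iff' hu₀).2 fun a h => hw (h ▸ U.smul_mem a hu)

lemma linearIndependent_pair_map {f : V →ₗ[F] W} {u w : V} (h : LinearIndependent F ![u, w])
    (hf : Disjoint (Submodule.span F {u, w}) (LinearMap.ker f)) :
    LinearIndependent F ![f u, f w] := by
  have := h.map (by rwa [Matrix.range_cons_cons_empty])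
  rwa [show ⇑f ∘ ![u, w] = ![f u, f w] by ext i : 1; fin_cases i <;> rfl] at this

lemma disjoint_span_pair_ker {f : V →ₗ[F] W} {u w : V} (h : LinearIndependent F ![f u, f w]) :
    Disjoint (Submodule.span F {u, w}) (LinearMap.ker f) := by
  rw [Submodule.disjoint_def]
  rintro _ hv hker
  obtain ⟨s, t, rfl⟩ := Submodule.mem_span_pair.1 hv
  obtain ⟨rfl, rfl⟩ := LinearIndependent.pair_iff.1 h s t (by simpa using hker)
  simp

lemma span_pair_le_ker_iff {f : V →ₗ[F] W} {u w : V} :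
    Submodule.span F {u, w} ≤ LinearMap.ker f ↔ f u = 0 ∧ f w = 0 := by
  simp [Submodule.span_le, Set.insert_subset_iff]

lemma exists_linearIndependent_pair_eq_span {S : Submodule F V} (hS : Module.finrank F S = 2) :
    ∃ u w : V, LinearIndependent F ![u, w] ∧ S = Submodule.span F {u, w} := by
  have : Module.Finite F S := Module.finite_of_finrank_eq_succ hS
  let b := Module.finBasisOfFinrankEq F S hS
  have hb : LinearIndependent F ![b 0, b 1] := by
    convert b.linearIndependent
    ext i : 1
    fin_cases i <;> rfl
  have h : LinearIndependent F ![(b 0 : V), b 1] :=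
    linearIndependent_pair_map (f := S.subtype) hb (by simp)
  exact ⟨_, _, h, eq_span_pair_of_linearIndependent hS (b 0).2 (b 1).2 h⟩

lemma exists_linearIndependent_pair_mem {W : Submodule F V} (hW : 1 < Module.finrank F W)
    {x : V} (hx : x ∈ W) (hx₀ : x ≠ 0) : ∃ p ∈ W, LinearIndependent F ![x, p] := by
  obtain ⟨p, hp⟩ := exists_linearIndependent_pair_of_one_lt_finrank hW (x := ⟨x, hx⟩)
    (by simpa using hx₀)
  exact ⟨p, p.2, by simpa using linearIndependent_pair_map hp (f := W.subtype) (by simp)⟩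

lemma not_disjoint_of_mem {S U : Submodule F V} {v : V} (hS : v ∈ S) (hU : v ∈ U) (hv : v ≠ 0) :
    ¬Disjoint S U :=
  fun h => hv (Submodule.disjoint_def.1 h v hS hU)

lemma exists_mem_ne_zero_of_not_disjoint {S U : Submodule F V} (h : ¬Disjoint S U) :
    ∃ v ∈ S, v ∈ U ∧ v ≠ 0 := by
  simpa [Submodule.disjoint_def] using h

lemma map_le_iff_of_comap_eq {f : V →ₗ[F] V} {S U : Submodule F V} (hU : U.comap f = U) :
    S.map f ≤ U ↔ S ≤ U := by
  rw [Submodule.map_le_iff_le_comap, hU]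

lemma disjoint_map_iff_of_comap_eq {f : V →ₗ[F] V} (hf : LinearMap.ker f = ⊥)
    {S U : Submodule F V} (hU : U.comap f = U) : Disjoint (S.map f) U ↔ Disjoint S U := by
  rw [disjoint_iff, disjoint_iff, Submodule.map_inf_eq_map_inf_comap, hU,
    (Submodule.map_injective_of_injective (LinearMap.ker_eq_bot.1 hf)).eq_iff'
      (Submodule.map_bot f)]

lemma mem_of_forall_add_smul_add_smul_mem {S : Submodule F V} {c d₁ d₂ : V}
    (h : ∀ α β : F, c + α • d₁ + β • d₂ ∈ S) : c ∈ S ∧ d₁ ∈ S ∧ d₂ ∈ S := by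
  have hc : c ∈ S := by simpa using h 0 0
  exact ⟨hc, by simpa using S.sub_mem (h 1 0) hc, by simpa using S.sub_mem (h 0 1) hc⟩

end Pairs

section NormalForm

lemma eq_top_of_forall_single_mem {ι : Type*} [Finite ι] [DecidableEq ι]
    {W : Submodule F (ι → F)} (h : ∀ i, Pi.single i 1 ∈ W) : W = ⊤ := by
  rw [eq_top_iff, ← (Pi.basisFun F ι).span_eq, Submodule.span_le]
  rintro _ ⟨i, rfl⟩
  simpa using h i

lemma span_triple_ne_top (a b c : Fin 4 → F) : Submodule.span F {a, b, c} ≠ ⊤ := by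
  intro h
  have := finrank_range_le_card (R := F) ![a, b, c]
  rw [Set.finrank, Matrix.range_cons, Matrix.range_cons_cons_empty, Set.singleton_union, h,
    finrank_top, Module.finrank_fin_fun] at this
  simp at this

/-- The affine plane `e₀ + ⟨e₂, e₃⟩` is not contained in `⟨p₁, p₂⟩`, and `e₁ + ⟨e₂, e₃⟩` is not
contained in `⟨p₁, p₂, u⟩`: otherwise these spans would contain every `eᵢ`. -/
lemma exists_linearIndependent_completion {p₁ p₂ : Fin 4 → F}
    (hp : LinearIndependent F ![p₁, p₂]) :
    ∃ u w : Fin 4 → F, LinearIndependent F ![p₁, p₂, u, w] ∧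
      u 0 = 1 ∧ u 1 = 0 ∧ w 0 = 0 ∧ w 1 = 1 := by
  let e (i : Fin 4) : Fin 4 → F := Pi.single i 1
  obtain ⟨α, β, hu⟩ : ∃ α β : F, e 0 + α • e 2 + β • e 3 ∉ Submodule.span F {p₁, p₂} := by
    by_contra! h
    obtain ⟨h₀, h₂, h₃⟩ := mem_of_forall_add_smul_add_smul_mem h
    have hle : Submodule.span F {p₁, p₂} ≤ Submodule.span F {p₁, p₂, e 1} :=
      Submodule.span_mono (by simp [Set.insert_subset_iff])
    refine span_triple_ne_top p₁ p₂ (e 1) (eq_top_of_forall_single_mem fun i => ?_)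
    fin_cases i
    exacts [hle h₀, Submodule.subset_span (Set.mem_insert_of_mem _ (Set.mem_insert_of_mem _ rfl)),
      hle h₂, hle h₃]
  set u := e 0 + α • e 2 + β • e 3
  obtain ⟨γ, δ, hw⟩ : ∃ γ δ : F, e 1 + γ • e 2 + δ • e 3 ∉ Submodule.span F {p₁, p₂, u} := by
    by_contra! h
    obtain ⟨h₁, h₂, h₃⟩ := mem_of_forall_add_smul_add_smul_mem h
    have hu' : u ∈ Submodule.span F {p₁, p₂, u} := Submodule.subset_span (by simp)
    have h₀ : e 0 ∈ Submodule.span F {p₁, p₂, u} := by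
      have := sub_mem (sub_mem hu' (Submodule.smul_mem _ β h₃)) (Submodule.smul_mem _ α h₂)
      rwa [add_sub_cancel_right, add_sub_cancel_right] at this
    refine span_triple_ne_top p₁ p₂ u (eq_top_of_forall_single_mem fun i => ?_)
    fin_cases i
    exacts [h₀, h₁, h₂, h₃]
  refine ⟨u, e 1 + γ • e 2 + δ • e 3, ?_, by simp [u, e], by simp [u, e], by simp [e],
    by simp [e]⟩
  have hpu : LinearIndependent F ![p₁, p₂, u] := by
    simpa using linearIndependent_finSnoc.2 ⟨hp, by rwa [Matrix.range_cons_cons_empty]⟩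
  simpa using linearIndependent_finSnoc.2 ⟨hpu, by
    rwa [Matrix.range_cons, Matrix.range_cons_cons_empty, Set.singleton_union]⟩

/-- The change of basis `Y` with first columns `q₁, q₂` turns the conditions on `r` into conditions
on the first two columns of `r Y`, which `exists_linearIndependent_completion` provides. -/
lemma exists_normalizing_matrix {p₁ p₂ q₁ q₂ : Fin 4 → F} (hp : LinearIndependent F ![p₁, p₂])
    (hq : LinearIndependent F ![q₁, q₂]) :
    ∃ r : Matrix (Fin 4) (Fin 4) F, IsUnit r.det ∧
      ![1, 0, 0, 0] ᵥ* r = p₁ ∧ ![0, 1, 0, 0] ᵥ* r = p₂ ∧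
      r *ᵥ q₁ = ![p₁ ⬝ᵥ q₁, p₂ ⬝ᵥ q₁, 1, 0] ∧ r *ᵥ q₂ = ![p₁ ⬝ᵥ q₂, p₂ ⬝ᵥ q₂, 0, 1] := by
  obtain ⟨d₃, hd₃⟩ := exists_linearIndependent_snoc_of_lt_finrank hq (by simp)
  obtain ⟨d₄, hd₄⟩ := exists_linearIndependent_snoc_of_lt_finrank hd₃ (by simp)
  set Y : Matrix (Fin 4) (Fin 4) F := (of ![q₁, q₂, d₃, d₄])ᵀ with hYdef
  have hY : IsUnit Y := by
    rw [hYdef, isUnit_transpose]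
    exact linearIndependent_rows_iff_isUnit.1 (by simpa using hd₄)
  have hYdet := (isUnit_iff_isUnit_det Y).1 hY
  have hY₁ : Y *ᵥ ![1, 0, 0, 0] = q₁ := by ext i; simp [Y, mulVec, dotProduct, Fin.sum_univ_four]
  have hY₂ : Y *ᵥ ![0, 1, 0, 0] = q₂ := by ext i; simp [Y, mulVec, dotProduct, Fin.sum_univ_four]
  have hpY : LinearIndependent F ![p₁ ᵥ* Y, p₂ ᵥ* Y] :=
    linearIndependent_pair_map (f := vecMulLinear Y) hp (by
      rw [LinearMap.ker_eq_bot.2 (vecMul_injective_iff_isUnit.2 hY)]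
      exact disjoint_bot_right)
  obtain ⟨u, w, huw, hu₀, hu₁, hw₀, hw₁⟩ := exists_linearIndependent_completion hpY
  set V : Matrix (Fin 4) (Fin 4) F := of ![p₁ ᵥ* Y, p₂ ᵥ* Y, u, w]
  have hV : IsUnit V := linearIndependent_rows_iff_isUnit.1 huw
  have hrow (x p : Fin 4 → F) (hx : x ᵥ* V = p ᵥ* Y) : x ᵥ* (V * Y⁻¹) = p := by
    rw [← vecMul_vecMul, hx, vecMul_vecMul, mul_nonsing_inv _ hYdet, vecMul_one]
  have hcol (q c : Fin 4 → F) (hc : Y *ᵥ c = q) : (V * Y⁻¹) *ᵥ q = V *ᵥ c := by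
    rw [← hc, mulVec_mulVec, Matrix.mul_assoc, nonsing_inv_mul _ hYdet, Matrix.mul_one]
  refine ⟨V * Y⁻¹, (isUnit_iff_isUnit_det _).1 (hV.mul (isUnit_nonsing_inv_iff.2 hY)), ?_, ?_,
    ?_, ?_⟩
  · exact hrow _ _ (by ext j; simp [V, vecMul, dotProduct, Fin.sum_univ_four])
  · exact hrow _ _ (by ext j; simp [V, vecMul, dotProduct, Fin.sum_univ_four])
  · rw [hcol q₁ _ hY₁]
    ext i; fin_cases i <;> simp [V, vecMul, mulVec, dotProduct, Fin.sum_univ_four, hu₀, hw₀, Y]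
  · rw [hcol q₂ _ hY₂]
    ext i; fin_cases i <;> simp [V, vecMul, mulVec, dotProduct, Fin.sum_univ_four, hu₁, hw₁, Y]

def perpPair (y₁ y₂ : Fin 4 → F) : Submodule F (Fin 4 → F) :=
  LinearMap.ker (of ![y₁, y₂]).mulVecLin

lemma mem_perpPair {y₁ y₂ p : Fin 4 → F} : p ∈ perpPair y₁ y₂ ↔ p ⬝ᵥ y₁ = 0 ∧ p ⬝ᵥ y₂ = 0 := by
  simp [perpPair, funext_iff, Fin.forall_fin_two, dotProduct_comm]

lemma one_lt_finrank_perpPair (y₁ y₂ : Fin 4 → F) : 1 < Module.finrank F (perpPair y₁ y₂) := by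
  have := LinearMap.finrank_range_add_finrank_ker (of ![y₁, y₂]).mulVecLin
  have := Submodule.finrank_le (LinearMap.range (of ![y₁, y₂]).mulVecLin)
  simp only [Module.finrank_fin_fun] at *
  rw [perpPair]
  omega

lemma linearIndependent_e₀_e₁ : LinearIndependent F ![(![1, 0, 0, 0] : Fin 4 → F), ![0, 1, 0, 0]] :=
  linearIndependent_pair_of_apply 0 1 rfl rfl rfl

lemma linearIndependent_e₂_e₃ : LinearIndependent F ![(![0, 0, 1, 0] : Fin 4 → F), ![0, 0, 0, 1]] :=
  linearIndependent_pair_of_apply 2 3 rfl rfl rfl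

end NormalForm

section Coordinates

/-- `eCoord v i` and `fCoord v i` are the coefficients of `e_{i+1}` and `f_{i+1}` in `v`; since
`f₁` is the last coordinate, `fCoord` reads the second half of `v` backwards. -/
def eCoord : (Fin 8 → F) →ₗ[F] (Fin 4 → F) where
  toFun v j := v (Fin.castLE (by norm_num) j)
  map_add' _ _ := rfl
  map_smul' _ _ := rfl

def fCoord : (Fin 8 → F) →ₗ[F] (Fin 4 → F) where
  toFun v j := v (Fin.rev (Fin.castLE (by norm_num) j))
  map_add' _ _ := rfl
  map_smul' _ _ := rfl

def ofCoords (x y : Fin 4 → F) : Fin 8 → F := fun i =>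
  if h : (i : ℕ) < 4 then x ⟨i, h⟩ else y ⟨7 - i, by omega⟩

@[simp] lemma eCoord_ofCoords (x y : Fin 4 → F) : eCoord (ofCoords x y) = x := by
  funext j
  fin_cases j <;> rfl

@[simp] lemma fCoord_ofCoords (x y : Fin 4 → F) : fCoord (ofCoords x y) = y := by
  funext j
  fin_cases j <;> rfl

lemma ofCoords_eCoord_fCoord (v : Fin 8 → F) : ofCoords (eCoord v) (fCoord v) = v := by
  funext i
  fin_cases i <;> rfl

lemma ext_coords {v w : Fin 8 → F} (he : eCoord v = eCoord w) (hf : fCoord v = fCoord w) :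
    v = w := by
  rw [← ofCoords_eCoord_fCoord v, ← ofCoords_eCoord_fCoord w, he, hf]

lemma eq_zero_of_coords_eq_zero {v : Fin 8 → F} (he : eCoord v = 0) (hf : fCoord v = 0) :
    v = 0 :=
  ext_coords (by simp [he]) (by simp [hf])

@[simp] lemma ofCoords_eq_zero_iff {x y : Fin 4 → F} : ofCoords x y = 0 ↔ x = 0 ∧ y = 0 := by
  refine ⟨fun h => ⟨?_, ?_⟩, fun ⟨hx, hy⟩ => eq_zero_of_coords_eq_zero (by simpa) (by simpa)⟩
  · simpa using congrArg eCoord h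
  · simpa using congrArg fCoord h

lemma B8_eq_coords (v w : Fin 8 → F) :
    B8 F v w = eCoord v ⬝ᵥ fCoord w + eCoord w ⬝ᵥ fCoord v := by
  simp [B8, Ip, mulVec, dotProduct, Fin.sum_univ_eight, Fin.sum_univ_four, eCoord, fCoord]
  ring

lemma eCoord_vecMul_emap (v : Fin 8 → F) (r : Matrix (Fin 4) (Fin 4) F) (a : F) :
    eCoord (v ᵥ* emap F r a) = eCoord v ᵥ* r := by
  funext j
  fin_cases j <;> simp [emap, vecMul, dotProduct, Fin.sum_univ_eight, Fin.sum_univ_four, eCoord]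

lemma fCoord_vecMul_emap (v : Fin 8 → F) (r : Matrix (Fin 4) (Fin 4) F) (a : F) :
    fCoord (v ᵥ* emap F r a) = a • (r⁻¹ *ᵥ fCoord v) := by
  funext j
  fin_cases j <;>
    · simp [emap, vecMul, mulVec, mul_apply, Ip, dotProduct, Fin.sum_univ_eight,
        Fin.sum_univ_four, fCoord]
      ring

lemma ofCoords_vecMul_emap_eq {x y : Fin 4 → F} {v : Fin 8 → F} {r : Matrix (Fin 4) (Fin 4) F}
    {a : F} (hr : IsUnit r.det) (hx : x ᵥ* r = eCoord v) (hy : r *ᵥ fCoord v = a • y) :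
    ofCoords x y ᵥ* emap F r a = v := by
  refine ext_coords (by rw [eCoord_vecMul_emap, eCoord_ofCoords, hx]) ?_
  rw [fCoord_vecMul_emap, fCoord_ofCoords, ← mulVec_smul, ← hy, mulVec_mulVec,
    nonsing_inv_mul _ hr, one_mulVec]

lemma sameOrbit_span_pair {x₁ y₁ x₂ y₂ : Fin 4 → F} {v₁ v₂ : Fin 8 → F}
    {r : Matrix (Fin 4) (Fin 4) F} {a : F} (hr : IsUnit r.det) (ha : a ≠ 0)
    (hx₁ : x₁ ᵥ* r = eCoord v₁) (hy₁ : r *ᵥ fCoord v₁ = a • y₁)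
    (hx₂ : x₂ ᵥ* r = eCoord v₂) (hy₂ : r *ᵥ fCoord v₂ = a • y₂) :
    SameOrbit F (.span F {ofCoords x₁ y₁, ofCoords x₂ y₂}) (.span F {v₁, v₂}) := by
  refine ⟨r, a, hr.ne_zero, ha, ?_⟩
  rw [Submodule.map_span, Set.image_pair, vecMulLinear_apply, vecMulLinear_apply,
    ofCoords_vecMul_emap_eq hr hx₁ hy₁, ofCoords_vecMul_emap_eq hr hx₂ hy₂]

lemma eCoord_dotProduct_fCoord_add_eq_zero {S : Submodule F (Fin 8 → F)}
    (hS : TotallyIsotropic F S) {v w : Fin 8 → F} (hv : v ∈ S) (hw : w ∈ S) :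
    eCoord v ⬝ᵥ fCoord w + eCoord w ⬝ᵥ fCoord v = 0 := by
  rw [← B8_eq_coords]
  exact hS v hv w hw

lemma eCoord_dotProduct_fCoord_self_eq_zero (h2 : (2 : F) ≠ 0) {S : Submodule F (Fin 8 → F)}
    (hS : TotallyIsotropic F S) {v : Fin 8 → F} (hv : v ∈ S) : eCoord v ⬝ᵥ fCoord v = 0 := by
  have := eCoord_dotProduct_fCoord_add_eq_zero hS hv hv
  rw [← two_mul] at this
  exact (mul_eq_zero.1 this).resolve_left h2

lemma totallyIsotropic_span_pair {u w : Fin 8 → F} (hu : B8 F u u = 0) (huw : B8 F u w = 0)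
    (hw : B8 F w w = 0) : TotallyIsotropic F (Submodule.span F {u, w}) := by
  intro v hv v' hv'
  obtain ⟨s, t, rfl⟩ := Submodule.mem_span_pair.1 hv
  obtain ⟨s', t', rfl⟩ := Submodule.mem_span_pair.1 hv'
  rw [B8_eq_coords] at hu huw hw ⊢
  simp only [map_add, map_smul, add_dotProduct, dotProduct_add, smul_dotProduct, dotProduct_smul,
    smul_eq_mul]
  linear_combination (s * s') * hu + (s * t' + s' * t) * huw + (t * t') * hw

end Coordinates

section Invariants

def U₁ : Submodule F (Fin 8 → F) := LinearMap.ker fCoord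

def U₂ : Submodule F (Fin 8 → F) := LinearMap.ker eCoord

lemma disjoint_U₁_U₂ : Disjoint (U₁ : Submodule F (Fin 8 → F)) U₂ := by
  rw [Submodule.disjoint_def]
  intro v h₁ h₂
  exact eq_zero_of_coords_eq_zero h₂ h₁

def CrossPairingVanishes (S : Submodule F (Fin 8 → F)) : Prop :=
  ∀ v ∈ S, ∀ w ∈ S, eCoord v ⬝ᵥ fCoord w = 0

lemma crossPairingVanishes_span_pair {u w : Fin 8 → F} (huu : eCoord u ⬝ᵥ fCoord u = 0)
    (huw : eCoord u ⬝ᵥ fCoord w = 0) (hwu : eCoord w ⬝ᵥ fCoord u = 0)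
    (hww : eCoord w ⬝ᵥ fCoord w = 0) : CrossPairingVanishes (Submodule.span F {u, w}) := by
  intro v hv v' hv'
  obtain ⟨s, t, rfl⟩ := Submodule.mem_span_pair.1 hv
  obtain ⟨s', t', rfl⟩ := Submodule.mem_span_pair.1 hv'
  simp only [map_add, map_smul, add_dotProduct, dotProduct_add, smul_dotProduct, dotProduct_smul,
    smul_eq_mul]
  linear_combination (s * s') * huu + (s * t') * huw + (t * s') * hwu + (t * t') * hww

open Classical in
noncomputable def orbitIndex (S : Submodule F (Fin 8 → F)) : Fin 7 :=
  if S ≤ U₁ then 0 else if S ≤ U₂ then 1 else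
  if Disjoint S U₁ then
    if Disjoint S U₂ then (if CrossPairingVanishes S then 6 else 5) else 4
  else if Disjoint S U₂ then 3 else 2

variable {r : Matrix (Fin 4) (Fin 4) F} {a : F}

lemma comap_vecMulLinear_emap_U₁ (hr : IsUnit r.det) (ha : a ≠ 0) :
    U₁.comap (vecMulLinear (emap F r a)) = U₁ := by
  ext v
  have hinj := mulVec_injective_iff_isUnit.2
    (isUnit_nonsing_inv_iff.2 ((isUnit_iff_isUnit_det r).2 hr))
  simp [U₁, fCoord_vecMul_emap, ha, hinj.eq_iff' (mulVec_zero _)]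

lemma comap_vecMulLinear_emap_U₂ (hr : IsUnit r.det) :
    U₂.comap (vecMulLinear (emap F r a)) = U₂ := by
  ext v
  have hinj := vecMul_injective_iff_isUnit.2 ((isUnit_iff_isUnit_det r).2 hr)
  simp [U₂, eCoord_vecMul_emap, hinj.eq_iff' (zero_vecMul _)]

lemma ker_vecMulLinear_emap (hr : IsUnit r.det) (ha : a ≠ 0) :
    LinearMap.ker (vecMulLinear (emap F r a)) = ⊥ := by
  rw [← Submodule.comap_bot, ← disjoint_U₁_U₂.eq_bot, Submodule.comap_inf,
    comap_vecMulLinear_emap_U₁ hr ha, comap_vecMulLinear_emap_U₂ hr]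

lemma eCoord_dotProduct_fCoord_vecMul_emap (hr : IsUnit r.det) (v w : Fin 8 → F) :
    eCoord (v ᵥ* emap F r a) ⬝ᵥ fCoord (w ᵥ* emap F r a) = a * (eCoord v ⬝ᵥ fCoord w) := by
  rw [eCoord_vecMul_emap, fCoord_vecMul_emap, dotProduct_smul, dotProduct_mulVec, vecMul_vecMul,
    mul_nonsing_inv _ hr, vecMul_one, smul_eq_mul]

lemma crossPairingVanishes_map_emap_iff (hr : IsUnit r.det) (ha : a ≠ 0)
    {S : Submodule F (Fin 8 → F)} :
    CrossPairingVanishes (S.map (vecMulLinear (emap F r a))) ↔ CrossPairingVanishes S := by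
  simp [CrossPairingVanishes, eCoord_dotProduct_fCoord_vecMul_emap hr, ha]

lemma orbitIndex_map_emap (hr : IsUnit r.det) (ha : a ≠ 0) (S : Submodule F (Fin 8 → F)) :
    orbitIndex (S.map (vecMulLinear (emap F r a))) = orbitIndex S := by
  have hker := ker_vecMulLinear_emap hr ha
  unfold orbitIndex
  rw [map_le_iff_of_comap_eq (comap_vecMulLinear_emap_U₁ hr ha),
    map_le_iff_of_comap_eq (comap_vecMulLinear_emap_U₂ (a := a) hr),
    disjoint_map_iff_of_comap_eq hker (comap_vecMulLinear_emap_U₁ hr ha),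
    disjoint_map_iff_of_comap_eq hker (comap_vecMulLinear_emap_U₂ hr),
    crossPairingVanishes_map_emap_iff hr ha]

lemma orbitIndex_eq_of_sameOrbit {S T : Submodule F (Fin 8 → F)} (h : SameOrbit F S T) :
    orbitIndex S = orbitIndex T := by
  obtain ⟨r, a, hr, ha, rfl⟩ := h
  exact (orbitIndex_map_emap (isUnit_iff_ne_zero.2 hr) ha S).symm

end Invariants

def orbitRep : Fin 7 → Submodule F (Fin 8 → F) := ![
  .span F {ofCoords ![1, 0, 0, 0] 0, ofCoords ![0, 1, 0, 0] 0},
  .span F {ofCoords 0 ![0, 0, 1, 0], ofCoords 0 ![0, 0, 0, 1]},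
  .span F {ofCoords ![1, 0, 0, 0] 0, ofCoords 0 ![0, 0, 1, 0]},
  .span F {ofCoords ![1, 0, 0, 0] 0, ofCoords ![0, 1, 0, 0] ![0, 0, 1, 0]},
  .span F {ofCoords 0 ![0, 0, 1, 0], ofCoords ![1, 0, 0, 0] ![0, 0, 0, 1]},
  .span F {ofCoords ![1, 0, 0, 0] ![0, -1, 1, 0], ofCoords ![0, 1, 0, 0] ![1, 0, 0, 1]},
  .span F {ofCoords ![1, 0, 0, 0] ![0, 0, 1, 0], ofCoords ![0, 1, 0, 0] ![0, 0, 0, 1]}]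

lemma totallyIsotropic_orbitRep (k : Fin 7) : TotallyIsotropic F (orbitRep k) := by
  fin_cases k <;> apply totallyIsotropic_span_pair <;> simp [B8_eq_coords]

lemma finrank_orbitRep (k : Fin 7) : Module.finrank F (orbitRep (F := F) k) = 2 := by
  fin_cases k <;> apply finrank_span_pair
  · exact linearIndependent_pair_of_apply 0 1 rfl rfl rfl
  · exact linearIndependent_pair_of_apply 5 4 rfl rfl rfl
  · exact linearIndependent_pair_of_apply 0 5 rfl rfl rfl
  · exact linearIndependent_pair_of_apply 0 1 rfl rfl rfl
  · exact linearIndependent_pair_of_apply 5 0 rfl rfl rfl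
  · exact linearIndependent_pair_of_apply 0 1 rfl rfl rfl
  · exact linearIndependent_pair_of_apply 0 1 rfl rfl rfl

lemma not_orbitRep_le_U₁ {k : Fin 7} (hk : k ≠ 0) : ¬orbitRep (F := F) k ≤ U₁ := by
  fin_cases k <;> simp_all [orbitRep, U₁, span_pair_le_ker_iff]

lemma not_orbitRep_le_U₂ {k : Fin 7} (hk : k ≠ 1) : ¬orbitRep (F := F) k ≤ U₂ := by
  fin_cases k <;> simp_all [orbitRep, U₂, span_pair_le_ker_iff]

lemma orbitIndex_orbitRep (k : Fin 7) : orbitIndex (orbitRep (F := F) k) = k := by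
  have mem₁ {u w : Fin 8 → F} : u ∈ Submodule.span F {u, w} := Submodule.subset_span (by simp)
  have mem₂ {u w : Fin 8 → F} : w ∈ Submodule.span F {u, w} := Submodule.subset_span (by simp)
  fin_cases k <;> simp only [Fin.reduceFinMk, Fin.zero_eta, Fin.mk_one]
  · exact if_pos (by simp [orbitRep, U₁, span_pair_le_ker_iff])
  · have h₂ : orbitRep (F := F) 1 ≤ U₂ := by simp [orbitRep, U₂, span_pair_le_ker_iff]
    simp [orbitIndex, not_orbitRep_le_U₁, h₂]
  · have h₁ : ¬Disjoint (orbitRep (F := F) 2) U₁ :=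
      not_disjoint_of_mem mem₁ (by simp [U₁]) (by simp)
    have h₂ : ¬Disjoint (orbitRep (F := F) 2) U₂ :=
      not_disjoint_of_mem mem₂ (by simp [U₂]) (by simp)
    simp [orbitIndex, not_orbitRep_le_U₁, not_orbitRep_le_U₂, h₁, h₂]
  · have h₁ : ¬Disjoint (orbitRep (F := F) 3) U₁ :=
      not_disjoint_of_mem mem₁ (by simp [U₁]) (by simp)
    have h₂ : Disjoint (orbitRep (F := F) 3) U₂ :=
      disjoint_span_pair_ker (by simpa using linearIndependent_e₀_e₁)
    simp [orbitIndex, not_orbitRep_le_U₁, not_orbitRep_le_U₂, h₁, h₂]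
  · have h₁ : Disjoint (orbitRep (F := F) 4) U₁ :=
      disjoint_span_pair_ker (by simpa using linearIndependent_e₂_e₃)
    have h₂ : ¬Disjoint (orbitRep (F := F) 4) U₂ :=
      not_disjoint_of_mem mem₁ (by simp [U₂]) (by simp)
    simp [orbitIndex, not_orbitRep_le_U₁, not_orbitRep_le_U₂, h₁, h₂]
  · have h₁ : Disjoint (orbitRep (F := F) 5) U₁ :=
      disjoint_span_pair_ker (linearIndependent_pair_of_apply 2 3 (by simp) (by simp) (by simp))
    have h₂ : Disjoint (orbitRep (F := F) 5) U₂ :=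
      disjoint_span_pair_ker (by simpa using linearIndependent_e₀_e₁)
    have h₃ : ¬CrossPairingVanishes (orbitRep (F := F) 5) := fun h => by
      simpa using h _ mem₁ _ mem₂
    simp [orbitIndex, not_orbitRep_le_U₁, not_orbitRep_le_U₂, h₁, h₂, h₃]
  · have h₁ : Disjoint (orbitRep (F := F) 6) U₁ :=
      disjoint_span_pair_ker (by simpa using linearIndependent_e₂_e₃)
    have h₂ : Disjoint (orbitRep (F := F) 6) U₂ :=
      disjoint_span_pair_ker (by simpa using linearIndependent_e₀_e₁)
    have h₃ : CrossPairingVanishes (orbitRep (F := F) 6) :=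
      crossPairingVanishes_span_pair (by simp) (by simp) (by simp) (by simp)
    simp [orbitIndex, not_orbitRep_le_U₁, not_orbitRep_le_U₂, h₁, h₂, h₃]

section Normalization

variable {S : Submodule F (Fin 8 → F)}

lemma sameOrbit_orbitRep_zero (hS : Module.finrank F S = 2) (hU : S ≤ U₁) :
    SameOrbit F (orbitRep 0) S := by
  obtain ⟨v₁, v₂, hv, rfl⟩ := exists_linearIndependent_pair_eq_span hS
  obtain ⟨hf₁, hf₂⟩ := span_pair_le_ker_iff.1 hU
  have he := linearIndependent_pair_map (f := eCoord) hv (disjoint_U₁_U₂.mono_left hU)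
  obtain ⟨r, hr, hr₁, hr₂, -, -⟩ := exists_normalizing_matrix he linearIndependent_e₀_e₁
  exact sameOrbit_span_pair hr one_ne_zero hr₁ (by simp [hf₁]) hr₂ (by simp [hf₂])

lemma sameOrbit_orbitRep_one (hS : Module.finrank F S = 2) (hU : S ≤ U₂) :
    SameOrbit F (orbitRep 1) S := by
  obtain ⟨v₁, v₂, hv, rfl⟩ := exists_linearIndependent_pair_eq_span hS
  obtain ⟨he₁, he₂⟩ := span_pair_le_ker_iff.1 hU
  have hf := linearIndependent_pair_map (f := fCoord) hv (disjoint_U₁_U₂.symm.mono_left hU)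
  have hW := one_lt_finrank_perpPair (fCoord v₁) (fCoord v₂)
  obtain ⟨p₁, hp₁, hp₁₀⟩ := Submodule.exists_mem_ne_zero_of_ne_bot
    (p := perpPair (fCoord v₁) (fCoord v₂)) (fun h => by rw [h, finrank_bot] at hW; omega)
  obtain ⟨p₂, hp₂, hp⟩ := exists_linearIndependent_pair_mem hW hp₁ hp₁₀
  rw [mem_perpPair] at hp₁ hp₂
  obtain ⟨r, hr, -, -, hq₁, hq₂⟩ := exists_normalizing_matrix hp hf
  exact sameOrbit_span_pair hr one_ne_zero (by simp [he₁]) (by simp [hq₁, hp₁, hp₂])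
    (by simp [he₂]) (by simp [hq₂, hp₁, hp₂])

lemma sameOrbit_orbitRep_two (hiso : TotallyIsotropic F S) (hS : Module.finrank F S = 2)
    (h₁ : ¬Disjoint S U₁) (h₂ : ¬Disjoint S U₂) : SameOrbit F (orbitRep 2) S := by
  obtain ⟨v, hvS, hfv, hv₀⟩ := exists_mem_ne_zero_of_not_disjoint h₁
  obtain ⟨w, hwS, hew, hw₀⟩ := exists_mem_ne_zero_of_not_disjoint h₂
  rw [U₁, LinearMap.mem_ker] at hfv
  rw [U₂, LinearMap.mem_ker] at hew
  have hev : eCoord v ≠ 0 := fun h => hv₀ (eq_zero_of_coords_eq_zero h hfv)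
  have hfw : fCoord w ≠ 0 := fun h => hw₀ (eq_zero_of_coords_eq_zero hew h)
  have hvw : eCoord v ⬝ᵥ fCoord w = 0 := by
    simpa [hfv, hew] using eCoord_dotProduct_fCoord_add_eq_zero hiso hvS hwS
  obtain ⟨p, hpW, hp⟩ := exists_linearIndependent_pair_mem
    (one_lt_finrank_perpPair (fCoord w) (fCoord w)) (mem_perpPair.2 ⟨hvw, hvw⟩) hev
  obtain ⟨q, hq⟩ := exists_linearIndependent_pair_of_one_lt_finrank
    (by simp : 1 < Module.finrank F (Fin 4 → F)) hfw
  obtain ⟨r, hr, hr₁, -, hq₁, -⟩ := exists_normalizing_matrix hp hq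
  rw [eq_span_pair_of_linearIndependent hS hvS hwS
    (linearIndependent_pair_of_mem_of_not_mem (U := U₁) hfv hv₀ hfw)]
  exact sameOrbit_span_pair hr one_ne_zero hr₁ (by simp [hfv]) (by simp [hew])
    (by simp [hq₁, hvw, (mem_perpPair.1 hpW).1])

lemma sameOrbit_orbitRep_three (h2 : (2 : F) ≠ 0) (hiso : TotallyIsotropic F S)
    (hS : Module.finrank F S = 2) (h₁ : ¬S ≤ U₁) (h₃ : ¬Disjoint S U₁) (h₄ : Disjoint S U₂) :
    SameOrbit F (orbitRep 3) S := by
  obtain ⟨v, hvS, hfv, hv₀⟩ := exists_mem_ne_zero_of_not_disjoint h₃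
  obtain ⟨w, hwS, hfw⟩ := SetLike.not_le_iff_exists.1 h₁
  obtain rfl := eq_span_pair_of_linearIndependent hS hvS hwS
    (linearIndependent_pair_of_mem_of_not_mem hfv hv₀ hfw)
  rw [U₁, LinearMap.mem_ker] at hfv hfw
  have he := linearIndependent_pair_map (f := eCoord)
    (linearIndependent_pair_of_mem_of_not_mem (U := U₁) hfv hv₀ hfw) h₄
  have hvw : eCoord v ⬝ᵥ fCoord w = 0 := by
    simpa [hfv] using eCoord_dotProduct_fCoord_add_eq_zero hiso hvS hwS
  have hww := eCoord_dotProduct_fCoord_self_eq_zero h2 hiso hwS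
  obtain ⟨q, hq⟩ := exists_linearIndependent_pair_of_one_lt_finrank
    (by simp : 1 < Module.finrank F (Fin 4 → F)) hfw
  obtain ⟨r, hr, hr₁, hr₂, hq₁, -⟩ := exists_normalizing_matrix he hq
  exact sameOrbit_span_pair hr one_ne_zero hr₁ (by simp [hfv]) hr₂ (by simp [hq₁, hvw, hww])

lemma sameOrbit_orbitRep_four (h2 : (2 : F) ≠ 0) (hiso : TotallyIsotropic F S)
    (hS : Module.finrank F S = 2) (h₂ : ¬S ≤ U₂) (h₃ : Disjoint S U₁) (h₄ : ¬Disjoint S U₂) :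
    SameOrbit F (orbitRep 4) S := by
  obtain ⟨w, hwS, hew, hw₀⟩ := exists_mem_ne_zero_of_not_disjoint h₄
  obtain ⟨v, hvS, hev⟩ := SetLike.not_le_iff_exists.1 h₂
  obtain rfl := eq_span_pair_of_linearIndependent hS hwS hvS
    (linearIndependent_pair_of_mem_of_not_mem hew hw₀ hev)
  rw [U₂, LinearMap.mem_ker] at hew hev
  have hf := linearIndependent_pair_map (f := fCoord)
    (linearIndependent_pair_of_mem_of_not_mem (U := U₂) hew hw₀ hev) h₃
  have hvw : eCoord v ⬝ᵥ fCoord w = 0 := by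
    simpa [hew] using eCoord_dotProduct_fCoord_add_eq_zero hiso hvS hwS
  have hvv := eCoord_dotProduct_fCoord_self_eq_zero h2 hiso hvS
  obtain ⟨p, hpW, hp⟩ := exists_linearIndependent_pair_mem
    (one_lt_finrank_perpPair (fCoord w) (fCoord v)) (mem_perpPair.2 ⟨hvw, hvv⟩) hev
  rw [mem_perpPair] at hpW
  obtain ⟨r, hr, hr₁, -, hq₁, hq₂⟩ := exists_normalizing_matrix hp hf
  exact sameOrbit_span_pair hr one_ne_zero (by simp [hew]) (by simp [hq₁, hvw, hpW])
    hr₁ (by simp [hq₂, hvv, hpW])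

/-- Here `β` is a nonzero alternating form on `S`; normalizing the columns by `c⁻¹`, where
`c = β(v₁, v₂)`, and taking `a = c` brings it to the representative. -/
lemma sameOrbit_orbitRep_five (h2 : (2 : F) ≠ 0) (hiso : TotallyIsotropic F S)
    (hS : Module.finrank F S = 2) (h₃ : Disjoint S U₁) (h₄ : Disjoint S U₂)
    (h₅ : ¬CrossPairingVanishes S) : SameOrbit F (orbitRep 5) S := by
  obtain ⟨v₁, v₂, hv, rfl⟩ := exists_linearIndependent_pair_eq_span hS
  have mem₁ : v₁ ∈ Submodule.span F {v₁, v₂} := Submodule.subset_span (by simp)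
  have mem₂ : v₂ ∈ Submodule.span F {v₁, v₂} := Submodule.subset_span (by simp)
  have h₁₁ := eCoord_dotProduct_fCoord_self_eq_zero h2 hiso mem₁
  have h₂₂ := eCoord_dotProduct_fCoord_self_eq_zero h2 hiso mem₂
  set c := eCoord v₁ ⬝ᵥ fCoord v₂
  have h₂₁ : eCoord v₂ ⬝ᵥ fCoord v₁ = -c := by
    linear_combination eCoord_dotProduct_fCoord_add_eq_zero hiso mem₁ mem₂
  have hc : c ≠ 0 := fun hc => h₅ (crossPairingVanishes_span_pair h₁₁ hc (by simp [h₂₁, hc]) h₂₂)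
  have he := linearIndependent_pair_map (f := eCoord) hv (by exact h₄)
  have hf := linearIndependent_pair_map (f := c⁻¹ • fCoord) hv
    (by rw [LinearMap.ker_smul _ _ (inv_ne_zero hc)]; exact h₃)
  obtain ⟨r, hr, hr₁, hr₂, hq₁, hq₂⟩ := exists_normalizing_matrix he hf
  have hscale (y : Fin 4 → F) : r *ᵥ y = c • (r *ᵥ (c⁻¹ • y)) := by
    rw [mulVec_smul, smul_smul, mul_inv_cancel₀ hc, one_smul]
  refine sameOrbit_span_pair hr hc hr₁ ?_ hr₂ ?_
  · rw [hscale, ← LinearMap.smul_apply, hq₁]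
    simp [dotProduct_smul, h₁₁, h₂₁, hc]
  · rw [hscale, ← LinearMap.smul_apply, hq₂]
    simp [dotProduct_smul, h₂₂, hc, c]

lemma sameOrbit_orbitRep_six (hS : Module.finrank F S = 2) (h₃ : Disjoint S U₁)
    (h₄ : Disjoint S U₂) (h₅ : CrossPairingVanishes S) : SameOrbit F (orbitRep 6) S := by
  obtain ⟨v₁, v₂, hv, rfl⟩ := exists_linearIndependent_pair_eq_span hS
  have mem₁ : v₁ ∈ Submodule.span F {v₁, v₂} := Submodule.subset_span (by simp)
  have mem₂ : v₂ ∈ Submodule.span F {v₁, v₂} := Submodule.subset_span (by simp)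
  have he := linearIndependent_pair_map (f := eCoord) hv (by exact h₄)
  have hf := linearIndependent_pair_map (f := fCoord) hv (by exact h₃)
  obtain ⟨r, hr, hr₁, hr₂, hq₁, hq₂⟩ := exists_normalizing_matrix he hf
  exact sameOrbit_span_pair hr one_ne_zero hr₁
    (by simp [hq₁, h₅ _ mem₁ _ mem₁, h₅ _ mem₂ _ mem₁]) hr₂
    (by simp [hq₂, h₅ _ mem₁ _ mem₂, h₅ _ mem₂ _ mem₂])

lemma sameOrbit_orbitRep_orbitIndex (h2 : (2 : F) ≠ 0) (hiso : TotallyIsotropic F S)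
    (hS : Module.finrank F S = 2) : SameOrbit F (orbitRep (orbitIndex S)) S := by
  unfold orbitIndex
  split_ifs with h₁ h₂ h₃ h₄ h₅ h₆
  · exact sameOrbit_orbitRep_zero hS h₁
  · exact sameOrbit_orbitRep_one hS h₂
  · exact sameOrbit_orbitRep_six hS h₃ h₄ h₅
  · exact sameOrbit_orbitRep_five h2 hiso hS h₃ h₄ h₅
  · exact sameOrbit_orbitRep_four h2 hiso hS h₂ h₃ h₄
  · exact sameOrbit_orbitRep_three h2 hiso hS h₁ h₃ h₆
  · exact sameOrbit_orbitRep_two hiso hS h₃ h₆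

end Normalization

end IsotropicPlanes

theorem statement6 (h2 : (2 : F) ≠ 0) :
    ∃ T : Fin 7 → Submodule F (Fin 8 → F),
      (∀ k, TotallyIsotropic F (T k) ∧ Module.finrank F ↥(T k) = 2) ∧
      (∀ k l, k ≠ l → ¬ SameOrbit F (T k) (T l)) ∧
      (∀ S : Submodule F (Fin 8 → F),
        TotallyIsotropic F S → Module.finrank F ↥S = 2 → ∃ k, SameOrbit F (T k) S) := by
  open IsotropicPlanes in
  refine ⟨orbitRep, fun k => ⟨totallyIsotropic_orbitRep k, finrank_orbitRep k⟩,
    fun k l hkl h => hkl ?_, fun S hiso hS => ⟨_, sameOrbit_orbitRep_orbitIndex h2 hiso hS⟩⟩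
  rw [← IsotropicPlanes.orbitIndex_orbitRep (F := F) k,
    ← IsotropicPlanes.orbitIndex_orbitRep (F := F) l, IsotropicPlanes.orbitIndex_eq_of_sameOrbit h]
end
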